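/- For fixed ρ ≥ 0 and fixed z2 ∈ [0,1], the function z1 ↦ h(ρ, z1, z2) = (1/2)(1 + z1·z2)·g(ρ, (z1 + z2)/(1 + z1·z2)) + (1/2)(1 - z1·z2)·g(ρ, (z1 - z2)/(1 - z1·z2)) is non-increasing in z1 on [0,1] (restricting to z1·z2 < 1 so the expression is defined, and interpreting g at negative arguments via g(ρ, z) = g(ρ, |z|)). -/
import Mathlib


open Real Set

noncomputable def g (ρ z : ℝ) : ℝ :=
  ((1/2) * (1 + z) ^ (1/(1+ρ)) + (1/2) * (1 - z) ^ (1/(1+ρ))) ^ (1+ρ)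

noncomputable def h (ρ z1 z2 : ℝ) : ℝ :=
  (1/2) * (1 + z1 * z2) * g ρ ((z1 + z2)/(1 + z1 * z2))
    + (1/2) * (1 - z1 * z2) * g ρ (|z1 - z2|/(1 - z1 * z2))

noncomputable def F (ρ x y : ℝ) : ℝ :=
  ((1/2) * x ^ (1/(1+ρ)) + (1/2) * y ^ (1/(1+ρ))) ^ (1+ρ)

lemma F_symm (ρ x y : ℝ) : F ρ x y = F ρ y x := by
  unfold F; ring_nf

lemma g_eq_F (ρ z : ℝ) : g ρ z = F ρ (1+z) (1-z) := rfl

lemma mink2 {p a1 a2 b1 b2 : ℝ} (hp : 1 ≤ p) (ha1 : 0 ≤ a1) (ha2 : 0 ≤ a2)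
    (hb1 : 0 ≤ b1) (hb2 : 0 ≤ b2) :
    ((a1+b1)^p + (a2+b2)^p)^(1/p) ≤ (a1^p+a2^p)^(1/p) + (b1^p+b2^p)^(1/p) := by
  have := Real.Lp_add_le_of_nonneg (s := (Finset.univ : Finset (Fin 2)))
    (f := ![a1,a2]) (g := ![b1,b2]) hp
    (by intro i _; fin_cases i <;> simpa) (by intro i _; fin_cases i <;> simpa)
  simpa [Fin.sum_univ_two] using this

lemma rpow_inv_rpow' {x p : ℝ} (hx : 0 ≤ x) (hp0 : 0 < p) : (x ^ (1/p)) ^ p = x := by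
  rw [← Real.rpow_mul hx, one_div, inv_mul_cancel₀ hp0.ne', Real.rpow_one]

/-- homogeneity of F -/
lemma F_homog {ρ c x y : ℝ} (hρ : 0 ≤ ρ) (hc : 0 ≤ c) (hx : 0 ≤ x) (hy : 0 ≤ y) :
    F ρ (c*x) (c*y) = c * F ρ x y := by
  have hp0 : (0:ℝ) < 1 + ρ := by linarith
  unfold F
  rw [Real.mul_rpow hc hx, Real.mul_rpow hc hy]
  have key : (1/2) * (c ^ (1/(1+ρ)) * x ^ (1/(1+ρ))) + (1/2) * (c ^ (1/(1+ρ)) * y ^ (1/(1+ρ)))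
      = c ^ (1/(1+ρ)) * ((1/2) * x ^ (1/(1+ρ)) + (1/2) * y ^ (1/(1+ρ))) := by ring
  rw [key, Real.mul_rpow (by positivity) (by positivity), rpow_inv_rpow' hc hp0]

set_option maxHeartbeats 1000000 in
lemma F_superadd {ρ x1 y1 x2 y2 : ℝ} (hρ : 0 ≤ ρ) (hx1 : 0 ≤ x1) (hy1 : 0 ≤ y1)
    (hx2 : 0 ≤ x2) (hy2 : 0 ≤ y2) :
    F ρ x1 y1 + F ρ x2 y2 ≤ F ρ (x1+x2) (y1+y2) := by
  have hp : (1:ℝ) ≤ 1 + ρ := by linarith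
  have hp0 : (0:ℝ) < 1 + ρ := by linarith
  set p := 1 + ρ with hpdef
  set a1 := (1/2) * x1 ^ (1/p) with ha1def
  set a2 := (1/2) * y1 ^ (1/p) with ha2def
  set b1 := (1/2) * x2 ^ (1/p) with hb1def
  set b2 := (1/2) * y2 ^ (1/p) with hb2def
  have ha1 : 0 ≤ a1 := by positivity
  have ha2 : 0 ≤ a2 := by positivity
  have hb1 : 0 ≤ b1 := by positivity
  have hb2 : 0 ≤ b2 := by positivity
  have hM : ((a1+a2)^p + (b1+b2)^p)^(1/p) ≤ (a1^p+b1^p)^(1/p) + (a2^p+b2^p)^(1/p) :=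
    mink2 hp ha1 hb1 ha2 hb2
  -- a1^p + b1^p : compute
  have hpow : ∀ {x : ℝ}, 0 ≤ x → ((1/2) * x ^ (1/p)) ^ p = (1/2:ℝ)^p * x := by
    intro x hx
    rw [Real.mul_rpow (by norm_num) (by positivity), rpow_inv_rpow' hx hp0]
  have e1 : a1^p + b1^p = (1/2:ℝ)^p * (x1 + x2) := by
    rw [ha1def, hb1def, hpow hx1, hpow hx2]; ring
  have e2 : a2^p + b2^p = (1/2:ℝ)^p * (y1 + y2) := by
    rw [ha2def, hb2def, hpow hy1, hpow hy2]; ring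
  have ehalf : ((1/2:ℝ)^p)^(1/p) = (1/2:ℝ) := by
    rw [← Real.rpow_mul (by norm_num), mul_one_div, div_self hp0.ne', Real.rpow_one]
  have e3 : (a1^p+b1^p)^(1/p) + (a2^p+b2^p)^(1/p)
      = (1/2) * (x1+x2) ^ (1/p) + (1/2) * (y1+y2) ^ (1/p) := by
    rw [e1, e2, Real.mul_rpow (by positivity) (by positivity),
      Real.mul_rpow (by positivity) (by positivity), ehalf]
  -- raise both sides to the p
  have hLnn : (0:ℝ) ≤ (a1+a2)^p + (b1+b2)^p := by positivity
  have final := Real.rpow_le_rpow (by positivity) hM (le_of_lt hp0)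
  rw [rpow_inv_rpow' hLnn hp0, e3] at final
  have eF1 : F ρ x1 y1 = (a1 + a2) ^ p := by unfold F; rw [ha1def, ha2def]
  have eF2 : F ρ x2 y2 = (b1 + b2) ^ p := by unfold F; rw [hb1def, hb2def]
  have eF3 : F ρ (x1+x2) (y1+y2)
      = ((1/2) * (x1+x2) ^ (1/p) + (1/2) * (y1+y2) ^ (1/p)) ^ p := by unfold F; rfl
  rw [eF1, eF2, eF3]
  exact final

lemma F_concave {ρ l x1 y1 x2 y2 : ℝ} (hρ : 0 ≤ ρ) (hl0 : 0 ≤ l) (hl1 : l ≤ 1)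
    (hx1 : 0 ≤ x1) (hy1 : 0 ≤ y1) (hx2 : 0 ≤ x2) (hy2 : 0 ≤ y2) :
    l * F ρ x1 y1 + (1-l) * F ρ x2 y2 ≤ F ρ (l*x1+(1-l)*x2) (l*y1+(1-l)*y2) := by
  have hl1' : (0:ℝ) ≤ 1 - l := by linarith
  rw [← F_homog hρ hl0 hx1 hy1, ← F_homog hρ hl1' hx2 hy2]
  exact F_superadd hρ (by positivity) (by positivity) (by positivity) (by positivity)

lemma h_eq {ρ z1 z2 : ℝ} (hρ : 0 ≤ ρ) (h1 : z1 ∈ Set.Icc (0:ℝ) 1)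
    (h2 : z2 ∈ Set.Icc (0:ℝ) 1) (hlt : z1*z2 < 1) :
    h ρ z1 z2 = 1/2 * F ρ ((1+z1)*(1+z2)) ((1-z1)*(1-z2))
      + 1/2 * F ρ ((1+z1)*(1-z2)) ((1-z1)*(1+z2)) := by
  obtain ⟨h10, h11⟩ := h1
  obtain ⟨h20, h21⟩ := h2
  have hc1 : (0:ℝ) < 1 + z1*z2 := by nlinarith
  have hc2 : (0:ℝ) < 1 - z1*z2 := by linarith
  have hw10 : (0:ℝ) ≤ (z1+z2)/(1+z1*z2) := by positivity
  have hw11 : (z1+z2)/(1+z1*z2) ≤ 1 := by rw [div_le_one hc1]; nlinarith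
  have hd1 : |z1 - z2| ≤ 1 - z1*z2 := by
    rw [abs_le]; constructor <;> nlinarith
  have hw20 : (0:ℝ) ≤ |z1-z2|/(1-z1*z2) := by positivity
  have hw21 : |z1-z2|/(1-z1*z2) ≤ 1 := by rw [div_le_one hc2]; exact hd1
  have t1 : (1 + z1*z2) * g ρ ((z1+z2)/(1+z1*z2))
      = F ρ ((1+z1)*(1+z2)) ((1-z1)*(1-z2)) := by
    rw [g_eq_F, ← F_homog hρ hc1.le (by linarith) (by linarith)]
    congr 1 <;> field_simp <;> ring
  have t2 : (1 - z1*z2) * g ρ (|z1-z2|/(1-z1*z2))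
      = F ρ ((1-z1*z2) + |z1-z2|) ((1-z1*z2) - |z1-z2|) := by
    rw [g_eq_F, ← F_homog hρ hc2.le (by linarith) (by linarith)]
    congr 1 <;> field_simp <;> ring
  have t3 : F ρ ((1-z1*z2) + |z1-z2|) ((1-z1*z2) - |z1-z2|)
      = F ρ ((1+z1)*(1-z2)) ((1-z1)*(1+z2)) := by
    rcases le_total z2 z1 with hz | hz
    · rw [abs_of_nonneg (by linarith : (0:ℝ) ≤ z1 - z2)]
      congr 1 <;> ring
    · rw [abs_of_nonpos (by linarith : z1 - z2 ≤ (0:ℝ)), F_symm]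
      congr 1 <;> ring
  have expand : h ρ z1 z2 = 1/2 * ((1 + z1*z2) * g ρ ((z1+z2)/(1+z1*z2)))
      + 1/2 * ((1 - z1*z2) * g ρ (|z1-z2|/(1-z1*z2))) := by
    unfold h; ring
  rw [expand, t1, t2, t3]

theorem h_antitone (ρ : ℝ) (hρ : 0 ≤ ρ) (z2 : ℝ) (hz2 : z2 ∈ Set.Icc (0:ℝ) 1) :
    AntitoneOn (fun z1 => h ρ z1 z2) {z1 : ℝ | z1 ∈ Set.Icc (0:ℝ) 1 ∧ z1 * z2 < 1} := by
  obtain ⟨hz20, hz21⟩ := hz2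
  intro s hs t ht hst
  simp only [Set.mem_setOf_eq, Set.mem_Icc] at hs ht
  obtain ⟨⟨hs0, hs1⟩, hslt⟩ := hs
  obtain ⟨⟨ht0, ht1⟩, htlt⟩ := ht
  rcases eq_or_lt_of_le hst with rfl | hstlt
  · exact le_refl _
  have htpos : 0 < t := lt_of_le_of_lt hs0 hstlt
  simp only
  rw [h_eq hρ ⟨hs0, hs1⟩ ⟨hz20, hz21⟩ hslt, h_eq hρ ⟨ht0, ht1⟩ ⟨hz20, hz21⟩ htlt]
  set l := (t+s)/(2*t) with hldef
  have hl0 : 0 ≤ l := by positivity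
  have hl1 : l ≤ 1 := by rw [hldef, div_le_one (by linarith)]; linarith
  have n1 : (0:ℝ) ≤ (1+t)*(1+z2) := by nlinarith
  have n2 : (0:ℝ) ≤ (1-t)*(1-z2) := mul_nonneg (by linarith) (by linarith)
  have n3 : (0:ℝ) ≤ (1-t)*(1+z2) := mul_nonneg (by linarith) (by linarith)
  have n4 : (0:ℝ) ≤ (1+t)*(1-z2) := mul_nonneg (by linarith) (by linarith)
  have A := F_concave (l := l) hρ hl0 hl1 n1 n2 n3 n4
  have B := F_concave (l := l) hρ hl0 hl1 n4 n3 n2 n1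
  have eA1 : l*((1+t)*(1+z2)) + (1-l)*((1-t)*(1+z2)) = (1+s)*(1+z2) := by
    rw [hldef]; field_simp; ring
  have eA2 : l*((1-t)*(1-z2)) + (1-l)*((1+t)*(1-z2)) = (1-s)*(1-z2) := by
    rw [hldef]; field_simp; ring
  have eB1 : l*((1+t)*(1-z2)) + (1-l)*((1-t)*(1-z2)) = (1+s)*(1-z2) := by
    rw [hldef]; field_simp; ring
  have eB2 : l*((1-t)*(1+z2)) + (1-l)*((1+t)*(1+z2)) = (1-s)*(1+z2) := by
    rw [hldef]; field_simp; ring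
  rw [eA1, eA2] at A
  rw [eB1, eB2] at B
  have sy1 : F ρ ((1-t)*(1+z2)) ((1+t)*(1-z2)) = F ρ ((1+t)*(1-z2)) ((1-t)*(1+z2)) := F_symm ..
  have sy2 : F ρ ((1-t)*(1-z2)) ((1+t)*(1+z2)) = F ρ ((1+t)*(1+z2)) ((1-t)*(1-z2)) := F_symm ..
  rw [sy1] at A
  rw [sy2] at B
  linarith
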